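/- arXiv:2506.19114 — 2 statements merged into one kernel-verified Lean document; each statement's English description precedes it below -/
import Mathlib

section
/- Let $d \geq 2$, $p_0 = 0$, and $(p_n)_{n\geq 1}$ a sequence of naturals with $p_n - p_{n-1} \geq 2$. For each $n$, let $R_1^{(n)} = \{0,\ldots,2^{p_{n-1}+1}-1\}^d \cap (\{0,\ldots,2^{p_{n-1}+1}-1\} \times \{0,\ldots,2^{p_{n-1}+1}-1\}^{d-1})$, i.e., the cubic set of sidelength $2^{p_{n-1}+1}$ with base point $0$, and let $s_n = -\left(\sum_{j=1}^{n-1} 2^{p_j}\right)(1,\ldots,1) \in \mathbb{Z}^d$. Then $s_n + R_1^{(n)} \subseteq s_{n+1} + R_1^{(n+1)}$ for every $n \geq 1$, and $\bigcup_{n=1}^{\infty} (s_n + R_1^{(n)}) = \mathbb{Z}^d$. -/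
/-!
Write `S m = ∑_{j=1}^m 2^(p j)`. The `(m+1)`-st translated cube is the box
`[-S m, 2^(p m + 1) - S m)^d`. Since `S (m+1) = S m + 2^(p (m+1))`, the box grows by
`2^(p (m+1))` on the left and by `2^(p (m+1)) - 2^(p m + 1) ≥ 0` on the right, which gives the
nesting. The gap condition makes the right growth at least `2^(p m + 1) ≥ 2`, and every term of
`S m` is at least `1`, so the box contains `[-m, 2m + 2)^d` and the boxes exhaust `ℤ^d`.
-/

open Finset

theorem image_const_add_cube {ι : Type*} (c L : ℤ) :
    (fun x => (fun _ => c) + x) '' {x : ι → ℤ | ∀ i, 0 ≤ x i ∧ x i < L} =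
      {y | ∀ i, c ≤ y i ∧ y i < c + L} := by
  ext y
  constructor
  · rintro ⟨x, hx, rfl⟩ i
    simp only [Pi.add_apply]
    constructor <;> linarith [hx i]
  · intro hy
    refine ⟨y - fun _ => c, fun i => ?_, add_sub_cancel _ _⟩
    simp only [Pi.sub_apply]
    constructor <;> linarith [hy i]

theorem exists_nat_abs_le {ι : Type*} [Finite ι] (x : ι → ℤ) : ∃ m : ℕ, ∀ i, |x i| ≤ m := by
  obtain ⟨M, hM⟩ := Finite.bddAbove_range fun i => |x i|
  exact ⟨M.toNat, fun i => (hM ⟨i, rfl⟩).trans (Int.self_le_toNat M)⟩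

section GapSum

variable (p : ℕ → ℕ)

theorem sum_Icc_succ_two_pow (m : ℕ) :
    ∑ j ∈ Icc 1 (m + 1), (2 : ℤ) ^ p j = ∑ j ∈ Icc 1 m, (2 : ℤ) ^ p j + 2 ^ p (m + 1) :=
  sum_Icc_succ_top (by omega) _

theorem le_sum_Icc_two_pow (m : ℕ) : (m : ℤ) ≤ ∑ j ∈ Icc 1 m, (2 : ℤ) ^ p j := by
  calc (m : ℤ) = ∑ _j ∈ Icc 1 m, (1 : ℤ) := by simp
    _ ≤ ∑ j ∈ Icc 1 m, (2 : ℤ) ^ p j :=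
      sum_le_sum fun j _ => one_le_pow₀ (by norm_num)

variable {p}

theorem two_mul_add_two_le_two_pow_sub_sum (hgap : ∀ m, p m + 2 ≤ p (m + 1)) (m : ℕ) :
    2 * (m : ℤ) + 2 ≤ 2 ^ (p m + 1) - ∑ j ∈ Icc 1 m, (2 : ℤ) ^ p j := by
  induction m with
  | zero => simpa using le_self_pow₀ (one_le_two (α := ℤ)) (p 0).succ_ne_zero
  | succ m ih =>
    have hgrow : (2 : ℤ) ^ (p m + 1) * 2 ≤ 2 ^ p (m + 1) := by
      rw [← pow_succ]; exact pow_le_pow_right₀ (by norm_num) (hgap m)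
    have htwo : (2 : ℤ) ≤ 2 ^ (p m + 1) := le_self_pow₀ (by norm_num) (Nat.succ_ne_zero _)
    rw [sum_Icc_succ_two_pow, pow_succ _ (p (m + 1))]
    push_cast
    linarith

end GapSum

theorem stmt_2_general (d : ℕ) (p : ℕ → ℕ)
    (hgap : ∀ n : ℕ, 1 ≤ n → p (n - 1) + 2 ≤ p n)
    (R : ℕ → Set (Fin d → ℤ))
    (hR : ∀ n : ℕ, R n = {x : Fin d → ℤ | ∀ i, 0 ≤ x i ∧ x i < 2 ^ (p (n - 1) + 1)})
    (s : ℕ → (Fin d → ℤ))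
    (hs : ∀ n : ℕ, s n = fun _ => -(∑ j ∈ Finset.Icc 1 (n - 1), (2 : ℤ) ^ (p j))) :
    (∀ n : ℕ, 1 ≤ n → (fun x => s n + x) '' R n ⊆ (fun x => s (n + 1) + x) '' R (n + 1)) ∧
    (⋃ n ∈ {n : ℕ | 1 ≤ n}, (fun x => s n + x) '' R n) = Set.univ := by
  have hgap' (m : ℕ) : p m + 2 ≤ p (m + 1) := by simpa using hgap (m + 1) m.succ_pos
  have hbox (m : ℕ) : (fun x => s (m + 1) + x) '' R (m + 1) =
      {y | ∀ i, -∑ j ∈ Icc 1 m, (2 : ℤ) ^ p j ≤ y i ∧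
        y i < -∑ j ∈ Icc 1 m, (2 : ℤ) ^ p j + 2 ^ (p m + 1)} := by
    rw [hR, hs]
    exact image_const_add_cube _ _
  constructor
  · intro n hn
    obtain ⟨m, rfl⟩ := Nat.exists_eq_add_of_le' hn
    have hright : (2 : ℤ) ^ (p m + 1) ≤ 2 ^ p (m + 1) :=
      pow_le_pow_right₀ (by norm_num) (by linarith [hgap' m])
    rw [hbox, hbox, sum_Icc_succ_two_pow, pow_succ _ (p (m + 1))]
    intro y hy i
    have := hy i
    constructor <;> linarith [pow_pos (two_pos (α := ℤ)) (p (m + 1))]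
  · refine Set.eq_univ_of_forall fun x => ?_
    obtain ⟨m, hm⟩ := exists_nat_abs_le x
    refine Set.mem_biUnion (x := m + 1) (Nat.le_add_left 1 m) ?_
    rw [hbox]
    intro i
    have := abs_le.mp (hm i)
    constructor <;>
      linarith [le_sum_Icc_two_pow p m, two_mul_add_two_le_two_pow_sub_sum hgap' m]

theorem stmt_2 (d : ℕ) (hd : 2 ≤ d) (p : ℕ → ℕ) (hp0 : p 0 = 0)
    (hgap : ∀ n : ℕ, 1 ≤ n → p (n - 1) + 2 ≤ p n)
    (R : ℕ → Set (Fin d → ℤ))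
    (hR : ∀ n : ℕ, R n = {x : Fin d → ℤ | ∀ i, 0 ≤ x i ∧ x i < 2 ^ (p (n - 1) + 1)})
    (s : ℕ → (Fin d → ℤ))
    (hs : ∀ n : ℕ, s n = fun _ => -(∑ j ∈ Finset.Icc 1 (n - 1), (2 : ℤ) ^ (p j))) :
    (∀ n : ℕ, 1 ≤ n → (fun x => s n + x) '' R n ⊆ (fun x => s (n + 1) + x) '' R (n + 1)) ∧
    (⋃ n ∈ {n : ℕ | 1 ≤ n}, (fun x => s n + x) '' R n) = Set.univ :=
  stmt_2_general d p hgap R hR s hs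
end

section
/- Let $M$ be a nonempty finite set, $\Psi: \mathbb{Z}^d \to M$ a repetitive mapping with repetitivity function $R(r)$, and for each $m \in M$ let $T_m \subseteq [0,1]^d$ be nonempty with $\min_{m} \min\{\operatorname{sep}(T_m), \operatorname{Dist}(T_m, \partial[0,1]^d)\} > 0$. Then the Delone set $X = \bigcup_{z \in \mathbb{Z}^d}(z + T_{\Psi(z)})$ is repetitive with repetitivity function $\tilde{R}(r) = R(r + 3\sqrt{d}) + \sqrt{d} - r$: for every $r > 0$, every $x \in X$ and every $y \in \mathbb{R}^d$, there is a translate of the patch $X \cap B(x,r)$ contained in $X \cap B(y, \tilde{R}(r) + r)$. -/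
/-!
A point of `X` is `z + t` with `z ∈ ℤᵈ` and `t` in the unit cube, so the `r`-patch of `X` about
`x₀ + s` only involves tiles at lattice points within `r + √d` of `x₀`. Repetitivity of `Ψ` at
radius `r + 3√d` copies that `Ψ`-patch to some `w` near `⌊y⌋`; translating by `w - x₀` carries the
`X`-patch into `X`, and the remaining `√d`'s absorb the cube offset `t` and the distance from
`⌊y⌋` to `y`.
-/

open Metric

def IsRepetitiveSet {E : Type*} [NormedAddCommGroup E] (X : Set E) (R : ℝ → ℝ) : Prop :=
  ∀ r > 0, ∀ x ∈ X, ∀ y, ∃ v, (fun t => v + t) '' (X ∩ ball x r) ⊆ X ∩ ball y (R r + r)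

section

variable {ι : Type*}

def unitCube (ι : Type*) : Set (EuclideanSpace ℝ ι) := {x | ∀ i, x i ∈ Set.Icc 0 1}

theorem zero_mem_unitCube : (0 : EuclideanSpace ℝ ι) ∈ unitCube ι :=
  fun _ => ⟨le_rfl, zero_le_one⟩

def intPoint (z : ι → ℤ) : EuclideanSpace ℝ ι := WithLp.toLp 2 fun i => (z i : ℝ)

@[simp]
theorem intPoint_add (z w : ι → ℤ) : intPoint (z + w) = intPoint z + intPoint w := by
  ext i; simp [intPoint]

@[simp]
theorem intPoint_sub (z w : ι → ℤ) : intPoint (z - w) = intPoint z - intPoint w := by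
  ext i; simp [intPoint]

def latticeDecoration {M : Type*} (Ψ : (ι → ℤ) → M) (T : M → Set (EuclideanSpace ℝ ι)) :
    Set (EuclideanSpace ℝ ι) :=
  ⋃ z, (fun t => intPoint z + t) '' T (Ψ z)

theorem mem_latticeDecoration {M : Type*} {Ψ : (ι → ℤ) → M} {T : M → Set (EuclideanSpace ℝ ι)}
    {x : EuclideanSpace ℝ ι} :
    x ∈ latticeDecoration Ψ T ↔ ∃ z, ∃ t ∈ T (Ψ z), intPoint z + t = x := by
  simp only [latticeDecoration, Set.mem_iUnion, Set.mem_image]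

variable [Fintype ι]

theorem EuclideanSpace.dist_le_sqrt_card_of_forall_dist_le_one {f g : EuclideanSpace ℝ ι}
    (h : ∀ i, dist (f i) (g i) ≤ 1) : dist f g ≤ √(Fintype.card ι) := by
  rw [EuclideanSpace.dist_eq]
  gcongr
  calc ∑ i, dist (f i) (g i) ^ 2 ≤ ∑ _i : ι, (1 : ℝ) :=
        Finset.sum_le_sum fun i _ => pow_le_one₀ dist_nonneg (h i)
    _ = Fintype.card ι := by simp

theorem dist_le_sqrt_card_of_mem_unitCube {a b : EuclideanSpace ℝ ι} (ha : a ∈ unitCube ι)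
    (hb : b ∈ unitCube ι) : dist a b ≤ √(Fintype.card ι) :=
  EuclideanSpace.dist_le_sqrt_card_of_forall_dist_le_one fun i =>
    Real.dist_le_of_mem_Icc_01 (ha i) (hb i)

theorem dist_intPoint_floor_le (y : EuclideanSpace ℝ ι) :
    dist (intPoint fun i => ⌊y i⌋) y ≤ √(Fintype.card ι) :=
  EuclideanSpace.dist_le_sqrt_card_of_forall_dist_le_one fun i => by
    change dist (⌊y i⌋ : ℝ) (y i) ≤ 1
    rw [dist_comm, Real.dist_eq, Int.self_sub_floor, Int.abs_fract]
    exact (Int.fract_lt_one _).le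

theorem dist_intPoint_lt_of_dist_add_lt {z x₀ : ι → ℤ} {t s : EuclideanSpace ℝ ι} {r : ℝ}
    (ht : t ∈ unitCube ι) (hs : s ∈ unitCube ι) (h : dist (intPoint z + t) (intPoint x₀ + s) < r) :
    dist (intPoint z) (intPoint x₀) < r + √(Fintype.card ι) :=
  calc dist (intPoint z) (intPoint x₀)
      = dist (intPoint z + t - t) (intPoint x₀ + s - s) := by simp only [add_sub_cancel_right]
    _ ≤ dist (intPoint z + t) (intPoint x₀ + s) + dist t s := dist_sub_sub_le _ _ _ _
    _ < r + √(Fintype.card ι) := add_lt_add_of_lt_of_le h (dist_le_sqrt_card_of_mem_unitCube ht hs)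

def IsRepetitive {M : Type*} (Ψ : (ι → ℤ) → M) (R : ℝ → ℝ) : Prop :=
  ∀ r > 0, ∀ x y : ι → ℤ, ∃ w : ι → ℤ, ball (intPoint w) r ⊆ ball (intPoint y) (R r) ∧
    ∀ z, intPoint z ∈ ball 0 r → Ψ (w + z) = Ψ (x + z)

theorem isRepetitiveSet_latticeDecoration {M : Type*} {Ψ : (ι → ℤ) → M}
    {T : M → Set (EuclideanSpace ℝ ι)} {R : ℝ → ℝ} (hT : ∀ m, T m ⊆ unitCube ι)
    (hΨ : IsRepetitive Ψ R) :
    IsRepetitiveSet (latticeDecoration Ψ T)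
      (fun r => R (r + 3 * √(Fintype.card ι)) + √(Fintype.card ι) - r) := by
  set c := √(Fintype.card ι)
  have hc : 0 ≤ c := Real.sqrt_nonneg _
  intro r hr x hx y
  obtain ⟨x₀, s, hs, rfl⟩ := mem_latticeDecoration.1 hx
  obtain ⟨w, hball, hagree⟩ := hΨ (r + 3 * c) (by positivity) x₀ fun i => ⌊y i⌋
  refine ⟨intPoint w - intPoint x₀, ?_⟩
  rintro _ ⟨p, ⟨hp, hpx⟩, rfl⟩
  obtain ⟨z, t, ht, rfl⟩ := mem_latticeDecoration.1 hp
  have hz : dist (intPoint z) (intPoint x₀) < r + c :=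
    dist_intPoint_lt_of_dist_add_lt (hT _ ht) (hT _ hs) hpx
  have hΨz : Ψ (w + (z - x₀)) = Ψ z := by
    rw [hagree (z - x₀) (by simpa [← dist_eq_norm] using hz.trans_le (by linarith)),
      add_sub_cancel]
  have hmove : intPoint w - intPoint x₀ + (intPoint z + t) = intPoint (w + (z - x₀)) + t := by
    simp only [intPoint_add, intPoint_sub]; abel
  have hnear : intPoint (w + (z - x₀)) + t ∈ ball (intPoint w) (r + 3 * c) := by
    have ht0 : ‖t‖ ≤ c := by
      simpa using dist_le_sqrt_card_of_mem_unitCube (hT _ ht) zero_mem_unitCube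
    rw [mem_ball, dist_eq_norm]
    calc ‖intPoint (w + (z - x₀)) + t - intPoint w‖
        = ‖(intPoint z - intPoint x₀) + t‖ := by simp only [intPoint_add, intPoint_sub]; abel_nf
      _ ≤ ‖intPoint z - intPoint x₀‖ + ‖t‖ := norm_add_le _ _
      _ < r + 3 * c := by rw [← dist_eq_norm]; linarith
  beta_reduce
  rw [hmove]
  refine ⟨mem_latticeDecoration.2 ⟨_, t, hΨz ▸ ht, rfl⟩, ?_⟩
  calc dist (intPoint (w + (z - x₀)) + t) y
      ≤ dist (intPoint (w + (z - x₀)) + t) (intPoint fun i => ⌊y i⌋) + dist _ y :=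
        dist_triangle _ _ _
    _ < R (r + 3 * c) + c := add_lt_add_of_lt_of_le (hball hnear) (dist_intPoint_floor_le y)
    _ = R (r + 3 * c) + c - r + r := by ring

end

theorem stmt_4_general (d : ℕ) (M : Type*)
    (T : M → Set (EuclideanSpace ℝ (Fin d)))
    (hTcube : ∀ m, T m ⊆ {x : EuclideanSpace ℝ (Fin d) | ∀ i, x i ∈ Set.Icc (0 : ℝ) 1})
    (Ψ : (Fin d → ℤ) → M) (R : ℝ → ℝ)
    -- Ψ is repetitive with repetitivity function R
    (hΨrep : ∀ r > (0 : ℝ), ∀ x y : Fin d → ℤ, ∃ w : Fin d → ℤ,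
      Metric.ball (α := EuclideanSpace ℝ (Fin d)) (WithLp.toLp 2 (fun i => (w i : ℝ))) r ⊆
        Metric.ball (α := EuclideanSpace ℝ (Fin d)) (WithLp.toLp 2 (fun i => (y i : ℝ))) (R r) ∧
      ∀ z : Fin d → ℤ,
        WithLp.toLp 2 (fun i => (z i : ℝ)) ∈ Metric.ball (α := EuclideanSpace ℝ (Fin d)) 0 r →
        Ψ (w + z) = Ψ (x + z))
    (X : Set (EuclideanSpace ℝ (Fin d)))
    (hX : X = ⋃ z : Fin d → ℤ, (fun t => WithLp.toLp 2 (fun i => (z i : ℝ)) + t) '' T (Ψ z)) :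
    -- X is repetitive with repetitivity function R̃(r) = R(r + 3√d) + √d - r
    ∀ r > (0 : ℝ), ∀ x ∈ X, ∀ y : EuclideanSpace ℝ (Fin d),
      ∃ v : EuclideanSpace ℝ (Fin d),
        (fun t => v + t) '' (X ∩ Metric.ball x r) ⊆
          X ∩ Metric.ball y ((R (r + 3 * Real.sqrt d) + Real.sqrt d - r) + r) := by
  have h := isRepetitiveSet_latticeDecoration (Ψ := Ψ) hTcube hΨrep
  rw [Fintype.card_fin] at h
  subst hX
  exact h

theorem stmt_4 (d : ℕ) (hd : 2 ≤ d) (M : Type*) [Fintype M] [Nonempty M]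
    (T : M → Set (EuclideanSpace ℝ (Fin d)))
    (hTcube : ∀ m, T m ⊆ {x : EuclideanSpace ℝ (Fin d) | ∀ i, x i ∈ Set.Icc (0 : ℝ) 1})
    (hTne : ∀ m, (T m).Nonempty)
    (hsep : ∃ ε > (0 : ℝ), ∀ m,
      (∀ x ∈ T m, ∀ y ∈ T m, x ≠ y → ε ≤ dist x y) ∧
      (∀ x ∈ T m, ∀ y ∈ frontier {x : EuclideanSpace ℝ (Fin d) | ∀ i, x i ∈ Set.Icc (0 : ℝ) 1},
        ε ≤ dist x y))
    (Ψ : (Fin d → ℤ) → M) (R : ℝ → ℝ)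
    -- Ψ is repetitive with repetitivity function R
    (hΨrep : ∀ r > (0 : ℝ), ∀ x y : Fin d → ℤ, ∃ w : Fin d → ℤ,
      Metric.ball (α := EuclideanSpace ℝ (Fin d)) (WithLp.toLp 2 (fun i => (w i : ℝ))) r ⊆
        Metric.ball (α := EuclideanSpace ℝ (Fin d)) (WithLp.toLp 2 (fun i => (y i : ℝ))) (R r) ∧
      ∀ z : Fin d → ℤ,
        WithLp.toLp 2 (fun i => (z i : ℝ)) ∈ Metric.ball (α := EuclideanSpace ℝ (Fin d)) 0 r →
        Ψ (w + z) = Ψ (x + z))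
    (X : Set (EuclideanSpace ℝ (Fin d)))
    (hX : X = ⋃ z : Fin d → ℤ, (fun t => WithLp.toLp 2 (fun i => (z i : ℝ)) + t) '' T (Ψ z)) :
    -- X is repetitive with repetitivity function R̃(r) = R(r + 3√d) + √d - r
    ∀ r > (0 : ℝ), ∀ x ∈ X, ∀ y : EuclideanSpace ℝ (Fin d),
      ∃ v : EuclideanSpace ℝ (Fin d),
        (fun t => v + t) '' (X ∩ Metric.ball x r) ⊆
          X ∩ Metric.ball y ((R (r + 3 * Real.sqrt d) + Real.sqrt d - r) + r) :=
  stmt_4_general d M T hTcube Ψ R hΨrep X hX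
end
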